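/- arXiv:1108.3072 — 5 statements merged into one kernel-verified Lean document; each statement's English description precedes it below -/
import Mathlib

section
/- Let D ≥ 1 and let S1, S2 be nonempty subsets of Ω = {0, 1, ..., D−1}. If π is a permutation of Ω chosen uniformly at random, then the probability that min(π(S1)) = min(π(S2)) equals the resemblance R = |S1 ∩ S2| / |S1 ∪ S2|. -/
/-!
Let `m` be the point of `S1 ∪ S2` that `π` sends lowest. The minima of `π` over `S1` and `S2`
agree exactly when `m ∈ S1 ∩ S2`. Right multiplication by the transposition `(a b)` of two points
of the union is a bijection of permutations exchanging the events `m = a` and `m = b`, so `m` is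
uniformly distributed on `S1 ∪ S2`.
-/

open Finset Equiv

namespace Equiv.Perm

variable {α : Type*} [DecidableEq α] [LinearOrder α]

def argminOn (U : Finset α) (hU : U.Nonempty) (π : Perm α) : α :=
  π.symm ((U.image π).min' (hU.image π))

variable {U : Finset α} (hU : U.Nonempty) (π : Perm α)

theorem argminOn_mem : argminOn U hU π ∈ U := by
  obtain ⟨x, hx, hπx⟩ := mem_image.mp ((U.image π).min'_mem (hU.image π))
  simpa [argminOn, ← hπx] using hx

theorem apply_argminOn_le {x : α} (hx : x ∈ U) : π (argminOn U hU π) ≤ π x := by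
  rw [argminOn, apply_symm_apply]
  exact min'_le _ _ (mem_image_of_mem π hx)

theorem argminOn_eq_of_forall_le {a : α} (ha : a ∈ U) (h : ∀ x ∈ U, π a ≤ π x) :
    argminOn U hU π = a :=
  π.injective <| le_antisymm (apply_argminOn_le hU π ha) (h _ (argminOn_mem hU π))

theorem min'_image_eq_apply_argminOn {S : Finset α} (hS : S.Nonempty) (hSU : S ⊆ U)
    (hm : argminOn U hU π ∈ S) : (S.image π).min' (hS.image π) = π (argminOn U hU π) :=
  le_antisymm (min'_le _ _ (mem_image_of_mem π hm)) <| le_min' _ _ _ <| by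
    rintro _ hy
    obtain ⟨x, hx, rfl⟩ := mem_image.mp hy
    exact apply_argminOn_le hU π (hSU hx)

theorem min'_image_eq_min'_image_iff {S₁ S₂ : Finset α} (h₁ : S₁.Nonempty) (h₂ : S₂.Nonempty) :
    (S₁.image π).min' (h₁.image π) = (S₂.image π).min' (h₂.image π) ↔
      argminOn (S₁ ∪ S₂) (h₁.mono subset_union_left) π ∈ S₁ ∩ S₂ := by
  set hU := h₁.mono subset_union_left
  have min'_eq {S : Finset α} (hS : S.Nonempty) (hSU : S ⊆ S₁ ∪ S₂) (hm : argminOn _ hU π ∈ S) :=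
    min'_image_eq_apply_argminOn hU π hS hSU hm
  rw [mem_inter]
  refine ⟨fun h => ?_, fun ⟨hm₁, hm₂⟩ => ?_⟩
  · rcases mem_union.mp (argminOn_mem hU π) with hm₁ | hm₂
    · have hmem := (S₂.image π).min'_mem (h₂.image π)
      rw [← h, min'_eq h₁ subset_union_left hm₁, π.injective.mem_finset_image] at hmem
      exact ⟨hm₁, hmem⟩
    · have hmem := (S₁.image π).min'_mem (h₁.image π)
      rw [h, min'_eq h₂ subset_union_right hm₂, π.injective.mem_finset_image] at hmem
      exact ⟨hmem, hm₂⟩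
  · rw [min'_eq h₁ subset_union_left hm₁, min'_eq h₂ subset_union_right hm₂]

theorem argminOn_mul_swap {a b : α} (ha : a ∈ U) (hb : b ∈ U) :
    argminOn U hU (π * swap a b) = swap a b (argminOn U hU π) := by
  have hswap : ∀ x ∈ U, swap a b x ∈ U := fun x hx => by
    rw [swap_apply_def]
    split_ifs <;> assumption
  refine argminOn_eq_of_forall_le hU _ (hswap _ (argminOn_mem hU π)) fun x hx => ?_
  simpa using apply_argminOn_le hU π (hswap x hx)

variable [Fintype α]

theorem card_filter_argminOn_eq {a b : α} (ha : a ∈ U) (hb : b ∈ U) :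
    #{π | argminOn U hU π = a} = #{π | argminOn U hU π = b} := by
  refine card_bij' (fun π _ => π * swap a b) (fun π _ => π * swap a b) ?_ ?_ ?_ ?_ <;>
    intro π hπ
  · simp_all [argminOn_mul_swap hU π ha hb]
  · simp_all [argminOn_mul_swap hU π ha hb]
  all_goals simp [mul_assoc]

theorem card_filter_argminOn_mem {T : Finset α} (hTU : T ⊆ U) {a : α} (ha : a ∈ U) :
    #{π | argminOn U hU π ∈ T} = #T * #{π | argminOn U hU π = a} := by
  rw [card_eq_sum_card_fiberwise (s := {π | argminOn U hU π ∈ T}) (t := T)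
      fun π hπ => (mem_filter.mp hπ).2,
    sum_congr rfl fun b hb => ?_, sum_const, smul_eq_mul]
  rw [filter_filter, ← card_filter_argminOn_eq hU (hTU hb) ha]
  congr 1
  ext π
  simp only [mem_filter, mem_univ, true_and, and_iff_right_iff_imp]
  rintro rfl
  exact hb

theorem card_filter_argminOn_mem_div_card {T : Finset α} (hTU : T ⊆ U) :
    (#{π | argminOn U hU π ∈ T} : ℝ) / Fintype.card (Perm α) = #T / #U := by
  obtain ⟨a, ha⟩ := id hU
  have hcard : Fintype.card (Perm α) = #U * #{π | argminOn U hU π = a} := by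
    rw [← card_filter_argminOn_mem _ subset_rfl ha, ← card_univ]
    congr
    simp [argminOn_mem]
  have hfiber : (#{π | argminOn U hU π = a} : ℝ) ≠ 0 := by
    have hpos := Fintype.card_pos (α := Perm α)
    rw [hcard] at hpos
    exact_mod_cast (Nat.pos_of_mul_pos_left hpos).ne'
  rw [card_filter_argminOn_mem _ hTU ha, hcard]
  push_cast
  exact mul_div_mul_right _ _ hfiber

end Equiv.Perm

theorem stmt0_general (D : ℕ) (S1 S2 : Finset (Fin D))
    (h1 : S1.Nonempty) (h2 : S2.Nonempty) :
    ((Finset.univ.filter (fun π : Equiv.Perm (Fin D) =>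
        (S1.image π).min' (h1.image π) = (S2.image π).min' (h2.image π))).card : ℝ)
      / (Fintype.card (Equiv.Perm (Fin D)) : ℝ)
    = ((S1 ∩ S2).card : ℝ) / ((S1 ∪ S2).card : ℝ) := by
  rw [filter_congr fun π _ => Perm.min'_image_eq_min'_image_iff π h1 h2]
  exact Perm.card_filter_argminOn_mem_div_card _ inter_subset_union

/-- For `D ≥ 1` and nonempty `S1, S2 ⊆ {0, …, D−1}`, the probability (over a
uniformly random permutation `π` of `{0, …, D−1}`) that `min(π(S1)) = min(π(S2))` equals the
resemblance `R = |S1 ∩ S2| / |S1 ∪ S2|`. -/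
theorem stmt0 (D : ℕ) (hD : 1 ≤ D) (S1 S2 : Finset (Fin D))
    (h1 : S1.Nonempty) (h2 : S2.Nonempty) :
    ((Finset.univ.filter (fun π : Equiv.Perm (Fin D) =>
        (S1.image π).min' (h1.image π) = (S2.image π).min' (h2.image π))).card : ℝ)
      / (Fintype.card (Equiv.Perm (Fin D)) : ℝ)
    = ((S1 ∩ S2).card : ℝ) / ((S1 ∪ S2).card : ℝ) :=
  stmt0_general D S1 S2 h1 h2
end

section
/- Let D ≥ 1, let S1, S2 be nonempty subsets of Ω = {0, 1, ..., D−1}, and let π_1, ..., π_k be k independent permutations of Ω, each chosen uniformly at random. Then the estimator R̂_M = (1/k) Σ_{j=1}^{k} 1{min(π_j(S1)) = min(π_j(S2))} satisfies E[R̂_M] = R, where R = |S1 ∩ S2| / |S1 ∪ S2| is the resemblance. -/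
/-!
Read a permutation `σ` as a random ranking of `Ω`. Then `min σ(S₁) = min σ(S₂)` holds exactly
when the element of `S₁ ∪ S₂` ranked first by `σ` lies in `S₁ ∩ S₂`. That first element is
uniformly distributed on `S₁ ∪ S₂`: composing `σ` on the right with the transposition of `a`
and `b` exchanges the permutations ranking `a` first with those ranking `b` first. So each
indicator has mean `|S₁ ∩ S₂| / |S₁ ∪ S₂|`, and by linearity so does their average over the
`k` independent permutations.
-/

open Finset

theorem Finset.min'_eq_min'_iff_min'_union_mem_inter {α : Type*} [LinearOrder α]
    {s t : Finset α} (hs : s.Nonempty) (ht : t.Nonempty) :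
    s.min' hs = t.min' ht ↔ (s ∪ t).min' (hs.mono subset_union_left) ∈ s ∩ t := by
  rw [min'_union hs ht, mem_inter]
  constructor
  · intro h
    rw [h, min_self]
    exact ⟨h ▸ s.min'_mem hs, t.min'_mem ht⟩
  · rintro ⟨hmin_s, hmin_t⟩
    exact le_antisymm ((min'_le s _ hmin_s).trans (min_le_right _ _))
      ((min'_le t _ hmin_t).trans (min_le_left _ _))

namespace Equiv.Perm

variable {α : Type*} [LinearOrder α]

def firstIn (σ : Perm α) (s : Finset α) (hs : s.Nonempty) : α :=
  σ.symm ((s.image σ).min' (hs.image σ))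

theorem firstIn_mem (σ : Perm α) {s : Finset α} (hs : s.Nonempty) : σ.firstIn s hs ∈ s := by
  obtain ⟨a, ha, h⟩ := mem_image.1 ((s.image σ).min'_mem (hs.image σ))
  rw [firstIn, ← h, symm_apply_apply]
  exact ha

theorem min'_image_eq_min'_image_iff_s1 (σ : Perm α) {s t : Finset α} (hs : s.Nonempty)
    (ht : t.Nonempty) :
    (s.image σ).min' (hs.image σ) = (t.image σ).min' (ht.image σ) ↔
      σ.firstIn (s ∪ t) (hs.mono subset_union_left) ∈ s ∩ t := by
  rw [min'_eq_min'_iff_min'_union_mem_inter, ← image_inter _ _ σ.injective,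
    Equiv.image_eq_preimage_symm_of_finset σ, mem_preimage]
  simp only [firstIn, image_union]

theorem firstIn_mul_swap (σ : Perm α) {s : Finset α} (hs : s.Nonempty) {a b : α} (ha : a ∈ s)
    (hb : b ∈ s) : (σ * swap a b).firstIn s hs = swap a b (σ.firstIn s hs) := by
  have hswap : s.image (swap a b) = s := by
    refine coe_injective ?_
    rw [coe_image]
    refine Set.image_perm fun x hx => ?_
    obtain ⟨-, rfl | rfl⟩ := swap_apply_ne_self_iff.1 hx <;> assumption
  have himage : s.image (σ * swap a b) = s.image σ := by
    rw [coe_mul, ← image_image, hswap]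
  simp only [firstIn, himage]
  rfl

variable [Fintype α]

theorem card_firstIn_eq_mul_card {s : Finset α} (hs : s.Nonempty) {a : α} (ha : a ∈ s) :
    #{σ : Perm α | σ.firstIn s hs = a} * #s = Fintype.card (Perm α) := by
  have hfiber :
      ∀ b ∈ s, #{σ : Perm α | σ.firstIn s hs = b} = #{σ : Perm α | σ.firstIn s hs = a} :=
    fun b hb => card_bij' (fun σ _ => σ * swap a b) (fun σ _ => σ * swap a b)
      (by simp +contextual [firstIn_mul_swap, ha, hb])
      (by simp +contextual [firstIn_mul_swap, ha, hb])
      (by simp [mul_assoc]) (by simp [mul_assoc])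
  rw [← card_univ, card_eq_sum_card_fiberwise (s := univ) (fun σ _ => firstIn_mem σ hs),
    sum_congr rfl hfiber, sum_const, smul_eq_mul, mul_comm]

theorem card_firstIn_mem_mul_card {s t : Finset α} (hs : s.Nonempty) (hts : t ⊆ s) :
    #{σ : Perm α | σ.firstIn s hs ∈ t} * #s = #t * Fintype.card (Perm α) := by
  rw [← sum_card_fiberwise_eq_card_filter, sum_mul,
    sum_congr rfl fun a ha => card_firstIn_eq_mul_card hs (hts ha), sum_const, smul_eq_mul]

theorem card_min'_image_eq_min'_image_mul_card_union {s t : Finset α} (hs : s.Nonempty)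
    (ht : t.Nonempty) :
    #{σ : Perm α | (s.image σ).min' (hs.image σ) = (t.image σ).min' (ht.image σ)} * #(s ∪ t) =
      #(s ∩ t) * Fintype.card (Perm α) := by
  rw [filter_congr fun σ _ => min'_image_eq_min'_image_iff_s1 σ hs ht]
  exact card_firstIn_mem_mul_card _ inter_subset_union

end Equiv.Perm

theorem Fintype.sum_apply_eq_card_pow_nsmul_sum {ι G M : Type*} [Fintype ι] [DecidableEq ι]
    [Fintype G] [AddCommMonoid M] (j : ι) (f : G → M) :
    ∑ π : ι → G, f (π j) = Fintype.card G ^ (Fintype.card ι - 1) • ∑ g, f g := by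
  rw [← Fintype.sum_equiv (Equiv.funSplitAt j G).symm (fun p => f p.1) _ (fun _ => by simp),
    Fintype.sum_prod_type_right]
  simp [Fintype.card_subtype_compl]

theorem Fintype.sum_pi_mean_div_card {ι G K : Type*} [Fintype ι] [DecidableEq ι] [Nonempty ι]
    [Fintype G] [Nonempty G] [Field K] [CharZero K] (f : G → K) :
    (∑ π : ι → G, (1 / (Fintype.card ι : K)) * ∑ j, f (π j)) / Fintype.card (ι → G) =
      (∑ g, f g) / Fintype.card G := by
  rw [← mul_sum, sum_comm]
  simp only [Fintype.sum_apply_eq_card_pow_nsmul_sum, sum_const, card_univ, nsmul_eq_mul,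
    Fintype.card_fun, ← pow_sub_one_mul Fintype.card_ne_zero]
  push_cast
  field_simp

theorem stmt1_general (D k : ℕ) (hk : 1 ≤ k) (S1 S2 : Finset (Fin D))
    (h1 : S1.Nonempty) (h2 : S2.Nonempty) :
    (∑ π : Fin k → Equiv.Perm (Fin D),
        (1 / (k : ℝ)) * ∑ j : Fin k,
          (if (S1.image (π j)).min' (h1.image (π j)) = (S2.image (π j)).min' (h2.image (π j))
            then (1 : ℝ) else 0))
      / (Fintype.card (Fin k → Equiv.Perm (Fin D)) : ℝ)
    = ((S1 ∩ S2).card : ℝ) / ((S1 ∪ S2).card : ℝ) := by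
  have : Nonempty (Fin k) := ⟨⟨0, hk⟩⟩
  have hunion : (#(S1 ∪ S2) : ℝ) ≠ 0 := by
    exact_mod_cast (card_pos.2 (h1.mono subset_union_left)).ne'
  have hmean := Fintype.sum_pi_mean_div_card (ι := Fin k) fun σ : Equiv.Perm (Fin D) =>
    if (S1.image σ).min' (h1.image σ) = (S2.image σ).min' (h2.image σ) then (1 : ℝ) else 0
  rw [Fintype.card_fin] at hmean
  rw [hmean, sum_boole, div_eq_div_iff (by positivity) hunion]
  exact_mod_cast Equiv.Perm.card_min'_image_eq_min'_image_mul_card_union h1 h2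

/-- For `D ≥ 1`, nonempty `S1, S2 ⊆ {0, …, D−1}`, and `k` independent uniformly
random permutations `π_1, …, π_k` (modeled as a uniformly random element of the product space of
`k`-tuples of permutations), the estimator
`R̂_M = (1/k) Σ_{j=1}^k 1{min(π_j(S1)) = min(π_j(S2))}` has expectation
`E[R̂_M] = R = |S1 ∩ S2| / |S1 ∪ S2|`. -/
theorem stmt1 (D k : ℕ) (hD : 1 ≤ D) (hk : 1 ≤ k) (S1 S2 : Finset (Fin D))
    (h1 : S1.Nonempty) (h2 : S2.Nonempty) :
    (∑ π : Fin k → Equiv.Perm (Fin D),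
        (1 / (k : ℝ)) * ∑ j : Fin k,
          (if (S1.image (π j)).min' (h1.image (π j)) = (S2.image (π j)).min' (h2.image (π j))
            then (1 : ℝ) else 0))
      / (Fintype.card (Fin k → Equiv.Perm (Fin D)) : ℝ)
    = ((S1 ∩ S2).card : ℝ) / ((S1 ∪ S2).card : ℝ) :=
  stmt1_general D k hk S1 S2 h1 h2
end

section
/- Fix an integer b ≥ 1 and define A_b(r) = r(1−r)^{2^b−1} / (1−(1−r)^{2^b}) for r ∈ (0,1), and for r1, r2 ∈ (0,1) set C_{1,b}(r1,r2) = A_b(r1)·r2/(r1+r2) + A_b(r2)·r1/(r1+r2) and C_{2,b}(r1,r2) = A_b(r1)·r1/(r1+r2) + A_b(r2)·r2/(r1+r2). Then there exists a constant K = K(b) > 0 such that for all r1, r2 ∈ (0, 1/2] and all R ∈ [0,1], |C_{1,b}(r1,r2) + (1 − C_{2,b}(r1,r2))R − (1/2^b + (1 − 1/2^b)R)| ≤ K·(r1 + r2). -/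
/-- `A_b(r) = r(1−r)^{2^b−1} / (1−(1−r)^{2^b})`. -/
noncomputable def bbitA (b : ℕ) (r : ℝ) : ℝ :=
  r * (1 - r) ^ (2 ^ b - 1) / (1 - (1 - r) ^ (2 ^ b))

/-- `C_{1,b} = A_b(r1)·r2/(r1+r2) + A_b(r2)·r1/(r1+r2)`. -/
noncomputable def bbitC1 (b : ℕ) (r1 r2 : ℝ) : ℝ :=
  bbitA b r1 * (r2 / (r1 + r2)) + bbitA b r2 * (r1 / (r1 + r2))

/-- `C_{2,b} = A_b(r1)·r1/(r1+r2) + A_b(r2)·r2/(r1+r2)`. -/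
noncomputable def bbitC2 (b : ℕ) (r1 r2 : ℝ) : ℝ :=
  bbitA b r1 * (r1 / (r1 + r2)) + bbitA b r2 * (r2 / (r1 + r2))

lemma aux_one_sub_pow_le (x : ℝ) (hx0 : 0 ≤ x) (m : ℕ) :
    1 - x ^ m ≤ m * (1 - x) := by
  have h := one_add_mul_le_pow (a := x - 1) (by linarith) m
  have h' : (1 : ℝ) + (x - 1) = x := by ring
  rw [h'] at h
  linarith

lemma bbitA_close (b : ℕ) (hb : 1 ≤ b) {r : ℝ} (hr0 : 0 < r) (hr2 : r ≤ 1 / 2) :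
    |bbitA b r - 1 / 2 ^ b| ≤ 2 ^ (2 ^ b) * r := by
  set n := 2 ^ b with hn
  have hn1 : 1 ≤ n := Nat.one_le_two_pow
  have hx0 : (0 : ℝ) < 1 - r := by linarith
  have hxh : (1 : ℝ) / 2 ≤ 1 - r := by linarith
  have hx1 : (1 : ℝ) - r ≤ 1 := by linarith
  set x : ℝ := 1 - r with hx
  set S : ℝ := ∑ i ∈ Finset.range n, x ^ i with hS
  have hSpos : 0 < S := by
    apply Finset.sum_pos (fun i _ => pow_pos hx0 i)
    exact ⟨0, Finset.mem_range.mpr (by omega)⟩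
  have hgeom : 1 - x ^ n = r * S := by
    have h := geom_sum_mul x n
    rw [← hS] at h
    have hr' : r = 1 - x := by rw [hx]; ring
    rw [hr']
    linear_combination h
  have hA : bbitA b r = x ^ (n - 1) / S := by
    rw [bbitA, ← hx, ← hn, hgeom, mul_div_mul_left _ _ hr0.ne']
  -- lower bound on S : n * x^(n-1) ≤ S
  have hS1 : (n : ℝ) * x ^ (n - 1) ≤ S := by
    have := Finset.card_nsmul_le_sum (Finset.range n) (fun i => x ^ i) (x ^ (n - 1))
      (fun i hi => pow_le_pow_of_le_one hx0.le hx1 (by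
        have := Finset.mem_range.mp hi; omega))
    simpa [nsmul_eq_mul] using this
  -- upper bound on S - n * x^(n-1)
  have hkey : S - (n : ℝ) * x ^ (n - 1) ≤ (n : ℝ) ^ 2 * r := by
    have hterm : ∀ i ∈ Finset.range n, x ^ i - x ^ (n - 1) ≤ (n : ℝ) * r := by
      intro i _
      have h1 : x ^ i ≤ 1 := pow_le_one₀ hx0.le hx1
      have h2 : 1 - x ^ (n - 1) ≤ ((n - 1 : ℕ) : ℝ) * (1 - x) :=
        aux_one_sub_pow_le x hx0.le (n - 1)
      have h3 : ((n - 1 : ℕ) : ℝ) ≤ (n : ℝ) := by exact_mod_cast Nat.sub_le n 1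
      have h4 : (1 : ℝ) - x = r := by rw [hx]; ring
      nlinarith
    have := Finset.sum_le_sum hterm
    simp only [Finset.sum_sub_distrib, Finset.sum_const, Finset.card_range,
      nsmul_eq_mul] at this
    calc S - (n : ℝ) * x ^ (n - 1) ≤ (n : ℝ) * ((n : ℝ) * r) := this
      _ = (n : ℝ) ^ 2 * r := by ring
  -- x^(n-1) ≥ (1/2)^(n-1)
  have hx2 : ((1 : ℝ) / 2) ^ (n - 1) ≤ x ^ (n - 1) :=
    pow_le_pow_left₀ (by norm_num) hxh _
  have h2n : (2 : ℝ) ^ n * ((1 : ℝ) / 2) ^ (n - 1) = 2 := by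
    have : (2 : ℝ) ^ n = 2 * 2 ^ (n - 1) := by
      rw [← pow_succ']
      congr 1
      omega
    rw [this, div_pow, one_pow]
    field_simp
  have hnpos : (0 : ℝ) < n := by exact_mod_cast Nat.pos_of_ne_zero (by omega)
  have hnc : ((n : ℝ)) = (2 : ℝ) ^ b := by rw [hn]; push_cast; ring
  have hdiff : bbitA b r - 1 / 2 ^ b = ((n : ℝ) * x ^ (n - 1) - S) / ((n : ℝ) * S) := by
    rw [hA, ← hnc]
    field_simp
  rw [hdiff, abs_div, abs_of_nonneg (by positivity : (0:ℝ) ≤ (n : ℝ) * S),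
    abs_of_nonpos (by linarith : (n : ℝ) * x ^ (n - 1) - S ≤ 0)]
  rw [div_le_iff₀ (by positivity)]
  have hSlow : (n : ℝ) * ((1:ℝ)/2) ^ (n - 1) ≤ S :=
    le_trans (mul_le_mul_of_nonneg_left hx2 hnpos.le) hS1
  have hp : (0:ℝ) < (2:ℝ) ^ n := by positivity
  have h2pow : 2 * (n : ℝ) ≤ (2 : ℝ) ^ n * S := by
    have := mul_le_mul_of_nonneg_left hSlow hp.le
    nlinarith
  have hcast : (2 : ℝ) ^ (2 ^ b) = (2 : ℝ) ^ n := by rw [hn]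
  rw [hcast]
  have hfin : (n : ℝ) ^ 2 * r ≤ 2 ^ n * r * ((n : ℝ) * S) := by
    have h1 : ((n:ℝ) * r) * (2 * (n:ℝ)) ≤ ((n:ℝ) * r) * ((2:ℝ) ^ n * S) :=
      mul_le_mul_of_nonneg_left h2pow (by positivity)
    nlinarith [sq_nonneg ((n:ℝ)), hr0.le, hnpos.le]
  linarith

/-- Fix `b ≥ 1`. There is a constant `K = K(b) > 0` such that for all
`r1, r2 ∈ (0, 1/2]` and all `R ∈ [0,1]`, the error of approximating
`P_b = C_{1,b} + (1 − C_{2,b})R` by `1/2^b + (1 − 1/2^b)R` is at most `K·(r1 + r2)`. -/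
theorem stmt6 (b : ℕ) (hb : 1 ≤ b) :
    ∃ K : ℝ, 0 < K ∧
      ∀ r1 ∈ Set.Ioc (0 : ℝ) (1 / 2), ∀ r2 ∈ Set.Ioc (0 : ℝ) (1 / 2),
        ∀ R ∈ Set.Icc (0 : ℝ) 1,
          |bbitC1 b r1 r2 + (1 - bbitC2 b r1 r2) * R
              - (1 / 2 ^ b + (1 - 1 / 2 ^ b) * R)|
            ≤ K * (r1 + r2) := by
  refine ⟨2 * 2 ^ (2 ^ b), by positivity, ?_⟩
  rintro r1 ⟨h10, h11⟩ r2 ⟨h20, h21⟩ R ⟨hR0, hR1⟩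
  have hA1 := bbitA_close b hb h10 h11
  have hA2 := bbitA_close b hb h20 h21
  set c : ℝ := 1 / 2 ^ b with hc
  set K0 : ℝ := 2 ^ (2 ^ b) with hK0
  have hsum : (0 : ℝ) < r1 + r2 := by linarith
  have hw1 : |r1 / (r1 + r2)| ≤ 1 := by
    rw [abs_of_nonneg (by positivity), div_le_one hsum]; linarith
  have hw2 : |r2 / (r1 + r2)| ≤ 1 := by
    rw [abs_of_nonneg (by positivity), div_le_one hsum]; linarith
  have hK0pos : (0:ℝ) < K0 := by positivity
  have hcomb : ∀ w1 w2 : ℝ, |w1| ≤ 1 → |w2| ≤ 1 →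
      |(bbitA b r1 - c) * w1 + (bbitA b r2 - c) * w2| ≤ K0 * (r1 + r2) := by
    intro w1 w2 hw1' hw2'
    calc |(bbitA b r1 - c) * w1 + (bbitA b r2 - c) * w2|
        ≤ |(bbitA b r1 - c) * w1| + |(bbitA b r2 - c) * w2| := abs_add_le _ _
      _ ≤ |bbitA b r1 - c| * 1 + |bbitA b r2 - c| * 1 := by
          rw [abs_mul, abs_mul]; gcongr <;> first | exact abs_nonneg _ | assumption
      _ ≤ K0 * r1 + K0 * r2 := by
          rw [mul_one, mul_one]; gcongr <;> assumption
      _ = K0 * (r1 + r2) := by ring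
  have hC1 : |bbitC1 b r1 r2 - c| ≤ K0 * (r1 + r2) := by
    have heq : bbitC1 b r1 r2 - c =
        (bbitA b r1 - c) * (r2 / (r1 + r2)) + (bbitA b r2 - c) * (r1 / (r1 + r2)) := by
      rw [bbitC1]; field_simp; try ring
    rw [heq]; exact hcomb _ _ hw2 hw1
  have hC2 : |bbitC2 b r1 r2 - c| ≤ K0 * (r1 + r2) := by
    have heq : bbitC2 b r1 r2 - c =
        (bbitA b r1 - c) * (r1 / (r1 + r2)) + (bbitA b r2 - c) * (r2 / (r1 + r2)) := by
      rw [bbitC2]; field_simp; try ring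
    rw [heq]; exact hcomb _ _ hw1 hw2
  have hRabs : |R| ≤ 1 := abs_le.mpr ⟨by linarith, hR1⟩
  have heq : bbitC1 b r1 r2 + (1 - bbitC2 b r1 r2) * R - (c + (1 - c) * R)
      = (bbitC1 b r1 r2 - c) + (c - bbitC2 b r1 r2) * R := by ring
  calc |bbitC1 b r1 r2 + (1 - bbitC2 b r1 r2) * R - (c + (1 - c) * R)|
      = |(bbitC1 b r1 r2 - c) + (c - bbitC2 b r1 r2) * R| := by rw [heq]
    _ ≤ |bbitC1 b r1 r2 - c| + |(c - bbitC2 b r1 r2) * R| := abs_add_le _ _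
    _ ≤ K0 * (r1 + r2) + |bbitC2 b r1 r2 - c| * 1 := by
        rw [abs_mul, abs_sub_comm c]
        gcongr
    _ ≤ K0 * (r1 + r2) + K0 * (r1 + r2) * 1 := by gcongr
    _ = 2 * K0 * (r1 + r2) := by ring
end

section
/- Let u1, u2 ∈ ℝ^D. Let r_1, ..., r_D be i.i.d. real random variables with E[r_i] = 0, E[r_i^2] = 1, E[r_i^3] = 0, and E[r_i^4] = s < ∞, and let h(1), ..., h(D) be i.i.d. random variables uniformly distributed on {1, ..., k}, independent of the r_i. Define g_{1,j} = Σ_{i=1}^{D} u_{1,i} r_i 1{h(i) = j} and g_{2,j} = Σ_{i=1}^{D} u_{2,i} r_i 1{h(i) = j} for j = 1, ..., k, and the VW estimator â_{vw,s} = Σ_{j=1}^{k} g_{1,j} g_{2,j}. Then Var(â_{vw,s}) = (s − 1) Σ_{i=1}^{D} u_{1,i}^2 u_{2,i}^2 + (1/k)[ (Σ_{i=1}^{D} u_{1,i}^2)(Σ_{i=1}^{D} u_{2,i}^2) + (Σ_{i=1}^{D} u_{1,i} u_{2,i})^2 − 2 Σ_{i=1}^{D} u_{1,i}^2 u_{2,i}^2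 ]. -/
/-!
Write the estimator as `â = ∑_{a,b} u1_a u2_b T_ab` with `T_ab = r_a r_b 1{h(a) = h(b)}`, so that
`Var â = ∑_{a,b,c,d} u1_a u2_b u1_c u2_d Cov(T_ab, T_cd)`. To compute `E[T_ab T_cd]`, expand
`1{h(a) = h(b)} = ∑_j 1{h(a) = j} 1{h(b) = j}`. If an index occurs only once among `a, b, c, d`, the
pair `(r_i, h(i))` it carries is independent of everything else and contributes the factor
`E[r_i 1{h(i) = j}] = E[r_i] P(h(i) = j) = 0`. The patterns that survive are `a = b = c = d`
(giving `E[r^4] = s`), `a = b ≠ c = d` (giving `E[r_a^2] E[r_c^2] = 1`) and `{a, b} = {c, d}` with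
`a ≠ b` (giving `E[r_a^2] E[r_b^2] P(h(a) = h(b)) = 1/k`).
-/

open MeasureTheory ProbabilityTheory

local notation "δ[" a ", " b "]" => (if a = b then (1 : ℝ) else 0)

@[fun_prop]
lemma measurable_ite_eq {α κ : Type*} [MeasurableSpace α] [MeasurableSpace κ] [MeasurableEq κ]
    [DecidableEq κ] {f g : α → κ} (hf : Measurable f) (hg : Measurable g) :
    Measurable fun x => δ[f x, g x] :=
  Measurable.ite (measurableSet_eq_fun hf hg) measurable_const measurable_const

lemma ProbabilityTheory.iIndepFun.indepFun_triple {Ω ι β : Type*} [MeasurableSpace Ω]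
    {μ : Measure Ω} [MeasurableSpace β] [DecidableEq ι] {X : ι → Ω → β} (hX : iIndepFun X μ)
    (hm : ∀ i, Measurable (X i)) {a b c d : ι} (hab : a ≠ b) (hac : a ≠ c) (had : a ≠ d) :
    IndepFun (X a) (fun ω => (X b ω, X c ω, X d ω)) μ :=
  (hX.indepFun_finset {a} {b, c, d} (by simp [hab, hac, had]) hm).comp
    (φ := fun x : ({a} : Finset ι) → β => x ⟨a, by simp⟩)
    (ψ := fun x : ({b, c, d} : Finset ι) → β => (x ⟨b, by simp⟩, x ⟨c, by simp⟩, x ⟨d, by simp⟩))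
    (by fun_prop) (by fun_prop)

section independence

variable {Ω ι α β κ : Type*} [MeasurableSpace Ω] {μ : Measure Ω} [MeasurableSpace α]
  [MeasurableSpace β] [MeasurableSpace κ] [MeasurableSingletonClass κ] [DecidableEq κ]

lemma integral_sq_mul_sq {r : ι → Ω → ℝ} (hindep : iIndepFun r μ) (hr : ∀ i, Measurable (r i))
    (hmom2 : ∀ i, ∫ ω, r i ω ^ 2 ∂μ = 1) {a b : ι} (hab : a ≠ b) :
    ∫ ω, r a ω ^ 2 * r b ω ^ 2 ∂μ = 1 := by
  rw [(hindep.indepFun hab).integral_fun_comp_mul_comp (f := (· ^ 2)) (g := (· ^ 2))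
    (hr a).aemeasurable (hr b).aemeasurable (by fun_prop) (by fun_prop), hmom2, hmom2, one_mul]

lemma integral_comp_mul_ite_eq {r : Ω → ℝ} {h : Ω → κ} (hrh : IndepFun r h μ)
    (hr : Measurable r) (hh : Measurable h) {f : ℝ → ℝ} (hf : Measurable f) (j : κ) :
    ∫ ω, f (r ω) * δ[h ω, j] ∂μ = (∫ ω, f (r ω) ∂μ) * μ.real {ω | h ω = j} := by
  rw [hrh.integral_fun_comp_mul_comp (g := fun i => δ[i, j]) hr.aemeasurable hh.aemeasurable
    hf.aestronglyMeasurable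
    (Measurable.ite measurableSet_eq measurable_const measurable_const).aestronglyMeasurable,
    ← integral_indicator_one (s := {ω | h ω = j}) (hh (measurableSet_singleton j))]
  simp [Set.indicator_apply]

lemma integral_mul_comp_eq_sum [Fintype κ] {X : Ω → α} {Y : Ω → β} (hXY : IndepFun X Y μ)
    (hX : Measurable X) (hY : Measurable Y) {p : α → κ} (hp : Measurable p) {F : α → ℝ}
    (hF : Measurable F) {G : κ → β → ℝ} (hG : ∀ j, Measurable (G j))
    (hint : Integrable (fun ω => F (X ω) * G (p (X ω)) (Y ω)) μ) :
    ∫ ω, F (X ω) * G (p (X ω)) (Y ω) ∂μ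
      = ∑ j, (∫ ω, F (X ω) * δ[p (X ω), j] ∂μ) * ∫ ω, G j (Y ω) ∂μ := by
  have hsplit (ω : Ω) :
      F (X ω) * G (p (X ω)) (Y ω) = ∑ j, δ[p (X ω), j] * (F (X ω) * G (p (X ω)) (Y ω)) := by
    simp
  have hterm (j : κ) (ω : Ω) :
      δ[p (X ω), j] * (F (X ω) * G (p (X ω)) (Y ω)) = F (X ω) * δ[p (X ω), j] * G j (Y ω) := by
    split_ifs with hj <;> simp [hj, mul_comm]
  rw [integral_congr_ae (ae_of_all _ hsplit), integral_finsetSum _ fun j _ =>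
    hint.bdd_mul (f := fun ω => δ[p (X ω), j]) (c := 1)
      (measurable_ite_eq (hp.comp hX) measurable_const).aestronglyMeasurable
      (ae_of_all _ fun ω => by split_ifs <;> simp)]
  refine Finset.sum_congr rfl fun j _ => ?_
  rw [integral_congr_ae (ae_of_all _ (hterm j))]
  exact hXY.integral_fun_comp_mul_comp (f := fun x => F x * δ[p x, j]) hX.aemeasurable
    hY.aemeasurable (hF.mul (measurable_ite_eq hp measurable_const)).aestronglyMeasurable
    (hG j).aestronglyMeasurable

lemma integral_mul_comp_eq_zero [Fintype κ] {r : Ω → ℝ} {h : Ω → κ} {Y : Ω → β}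
    (hXY : IndepFun (fun ω => (r ω, h ω)) Y μ) (hrh : IndepFun r h μ) (hr : Measurable r)
    (hh : Measurable h) (hY : Measurable Y) (hmean : ∫ ω, r ω ∂μ = 0) {G : κ → β → ℝ}
    (hG : ∀ j, Measurable (G j)) (hint : Integrable (fun ω => r ω * G (h ω) (Y ω)) μ) :
    ∫ ω, r ω * G (h ω) (Y ω) ∂μ = 0 := by
  rw [integral_mul_comp_eq_sum (F := Prod.fst) (p := Prod.snd) hXY (hr.prodMk hh) hY
    measurable_snd measurable_fst hG hint]
  refine Finset.sum_eq_zero fun j _ => ?_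
  have hcentred := integral_comp_mul_ite_eq hrh hr hh measurable_id j
  simp_all

end independence

section collisionTerm

variable {Ω ι κ : Type*} [DecidableEq κ]

def collisionTerm (r : ι → Ω → ℝ) (h : ι → Ω → κ) (a b : ι) (ω : Ω) : ℝ :=
  r a ω * r b ω * δ[h a ω, h b ω]

variable {r : ι → Ω → ℝ} {h : ι → Ω → κ}

lemma collisionTerm_comm (a b : ι) : collisionTerm r h a b = collisionTerm r h b a := by
  ext ω
  simp only [collisionTerm, eq_comm (a := h a ω), mul_comm (r a ω)]

lemma collisionTerm_self (a : ι) : collisionTerm r h a a = fun ω => r a ω ^ 2 := by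
  ext ω
  simp [collisionTerm, sq]

lemma sum_mul_sum_eq_sum_collisionTerm [Fintype ι] [Fintype κ] (u1 u2 : ι → ℝ) (ω : Ω) :
    ∑ j, (∑ i, u1 i * r i ω * δ[h i ω, j]) * (∑ i, u2 i * r i ω * δ[h i ω, j])
      = ∑ p : ι × ι, u1 p.1 * u2 p.2 * collisionTerm r h p.1 p.2 ω := by
  simp only [Finset.sum_mul_sum, Fintype.sum_prod_type, collisionTerm]
  rw [Finset.sum_comm]
  refine Finset.sum_congr rfl fun a _ => ?_
  rw [Finset.sum_comm]
  refine Finset.sum_congr rfl fun b _ => ?_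
  split_ifs with hab
  · simp only [hab, mul_ite, mul_one, mul_zero, Finset.sum_ite_eq, Finset.mem_univ, if_true]
    ring
  · simp [hab, mul_ite, ite_mul]

variable [MeasurableSpace Ω] {μ : Measure Ω} [MeasurableSpace κ] [MeasurableSingletonClass κ]
  [Fintype κ]

lemma measurable_collisionTerm (hr : ∀ i, Measurable (r i)) (hh : ∀ i, Measurable (h i))
    (a b : ι) : Measurable (collisionTerm r h a b) :=
  ((hr a).mul (hr b)).mul (measurable_ite_eq (hh a) (hh b))

lemma memLp_collisionTerm (hr : ∀ i, Measurable (r i)) (hh : ∀ i, Measurable (h i))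
    (hL4 : ∀ i, MemLp (r i) 4 μ) (a b : ι) : MemLp (collisionTerm r h a b) 2 μ := by
  have : ENNReal.HolderTriple 4 4 2 := ⟨by
    rw [show (4 : ENNReal)⁻¹ = 2⁻¹ / 2 by
      rw [ENNReal.div_eq_inv_mul, ← ENNReal.mul_inv (by simp) (by simp)]; norm_num]
    exact ENNReal.add_halves _⟩
  refine ((hL4 b).mul (hL4 a)).of_le (measurable_collisionTerm hr hh a b).aestronglyMeasurable
    (ae_of_all _ fun ω => ?_)
  simp only [collisionTerm, Pi.mul_apply, norm_mul]
  split_ifs <;> simp [mul_nonneg]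

end collisionTerm

section moments

variable {Ω ι κ : Type*} [MeasurableSpace Ω] {μ : Measure Ω} [MeasurableSpace κ]
  [MeasurableSingletonClass κ] [Fintype κ] [DecidableEq κ] {r : ι → Ω → ℝ} {h : ι → Ω → κ}

lemma integral_collisionTerm [IsProbabilityMeasure μ] [DecidableEq ι]
    (hr : ∀ i, Measurable (r i)) (hh : ∀ i, Measurable (h i))
    (hindep : iIndepFun (fun i ω => (r i ω, h i ω)) μ) (hrh : ∀ i, IndepFun (r i) (h i) μ)
    (hL4 : ∀ i, MemLp (r i) 4 μ) (hmean : ∀ i, ∫ ω, r i ω ∂μ = 0)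
    (hmom2 : ∀ i, ∫ ω, r i ω ^ 2 ∂μ = 1) (a b : ι) :
    ∫ ω, collisionTerm r h a b ω ∂μ = δ[a, b] := by
  rcases eq_or_ne a b with rfl | hab
  · simp [collisionTerm_self, hmom2]
  rw [if_neg hab]
  refine (integral_congr_ae (ae_of_all _ fun ω => ?_)).trans
    (integral_mul_comp_eq_zero (hindep.indepFun hab) (hrh a) (hr a) (hh a) ((hr b).prodMk (hh b))
      (hmean a) (G := fun j y => y.1 * δ[j, y.2]) (fun j => by fun_prop) ?_)
  · simp [collisionTerm]
  · refine ((memLp_collisionTerm hr hh hL4 a b).integrable one_le_two).congr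
      (ae_of_all _ fun ω => ?_)
    simp [collisionTerm]

lemma integral_collisionTerm_mul_eq_zero [DecidableEq ι] (hr : ∀ i, Measurable (r i))
    (hh : ∀ i, Measurable (h i)) (hindep : iIndepFun (fun i ω => (r i ω, h i ω)) μ)
    (hrh : ∀ i, IndepFun (r i) (h i) μ) (hL4 : ∀ i, MemLp (r i) 4 μ)
    (hmean : ∀ i, ∫ ω, r i ω ∂μ = 0) {a b c d : ι} (hab : a ≠ b) (hac : a ≠ c) (had : a ≠ d) :
    ∫ ω, collisionTerm r h a b ω * collisionTerm r h c d ω ∂μ = 0 := by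
  have hX (i : ι) : Measurable fun ω => (r i ω, h i ω) := (hr i).prodMk (hh i)
  refine (integral_congr_ae (ae_of_all _ fun ω => ?_)).trans
    (integral_mul_comp_eq_zero (hindep.indepFun_triple hX hab hac had) (hrh a) (hr a) (hh a)
      (by fun_prop) (hmean a) (G := fun j y => y.1.1 * δ[j, y.1.2] *
        (y.2.1.1 * y.2.2.1 * δ[y.2.1.2, y.2.2.2])) (fun j => by fun_prop) ?_)
  · simp only [collisionTerm]; ring
  · refine ((memLp_collisionTerm hr hh hL4 a b).integrable_mul
      (memLp_collisionTerm hr hh hL4 c d)).congr (ae_of_all _ fun ω => ?_)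
    simp only [collisionTerm, Pi.mul_apply]; ring

lemma integral_collisionTerm_mul_self (hr : ∀ i, Measurable (r i))
    (hh : ∀ i, Measurable (h i)) (hindep : iIndepFun (fun i ω => (r i ω, h i ω)) μ)
    (hrh : ∀ i, IndepFun (r i) (h i) μ) (hL4 : ∀ i, MemLp (r i) 4 μ)
    (hmom2 : ∀ i, ∫ ω, r i ω ^ 2 ∂μ = 1)
    (hunif : ∀ i j, μ {ω | h i ω = j} = (Fintype.card κ : ENNReal)⁻¹) {a b : ι} (hab : a ≠ b) :
    ∫ ω, collisionTerm r h a b ω * collisionTerm r h a b ω ∂μ = (Fintype.card κ : ℝ)⁻¹ := by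
  have hbucket (i : ι) (j : κ) : ∫ ω, r i ω ^ 2 * δ[h i ω, j] ∂μ = (Fintype.card κ : ℝ)⁻¹ := by
    rw [integral_comp_mul_ite_eq (f := (· ^ 2)) (hrh i) (hr i) (hh i) (by fun_prop), hmom2,
      measureReal_def, hunif]
    simp
  have hpt (ω : Ω) : collisionTerm r h a b ω * collisionTerm r h a b ω
      = r a ω ^ 2 * (r b ω ^ 2 * δ[h b ω, h a ω]) := by
    by_cases hc : h a ω = h b ω
    · simp only [collisionTerm, hc, if_true, mul_one]
      ring
    · simp [collisionTerm, hc, Ne.symm hc]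
  rw [integral_congr_ae (ae_of_all _ hpt), integral_mul_comp_eq_sum (hindep.indepFun hab)
    ((hr a).prodMk (hh a)) ((hr b).prodMk (hh b)) measurable_snd (F := fun x => x.1 ^ 2)
    (by fun_prop) (G := fun j y => y.1 ^ 2 * δ[y.2, j]) (fun j => by fun_prop)
    (((memLp_collisionTerm hr hh hL4 a b).integrable_mul
      (memLp_collisionTerm hr hh hL4 a b)).congr (ae_of_all _ hpt))]
  simp only [hbucket, Finset.sum_const, Finset.card_univ, nsmul_eq_mul]
  simpa [mul_comm] using mul_self_mul_inv (Fintype.card κ : ℝ)⁻¹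

lemma integral_collisionTerm_mul [DecidableEq ι] (hr : ∀ i, Measurable (r i))
    (hh : ∀ i, Measurable (h i)) (hindep : iIndepFun (fun i ω => (r i ω, h i ω)) μ)
    (hrh : ∀ i, IndepFun (r i) (h i) μ) (hL4 : ∀ i, MemLp (r i) 4 μ)
    (hmean : ∀ i, ∫ ω, r i ω ∂μ = 0) (hmom2 : ∀ i, ∫ ω, r i ω ^ 2 ∂μ = 1) {s : ℝ}
    (hmom4 : ∀ i, ∫ ω, r i ω ^ 4 ∂μ = s)
    (hunif : ∀ i j, μ {ω | h i ω = j} = (Fintype.card κ : ENNReal)⁻¹) (a b c d : ι) :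
    ∫ ω, collisionTerm r h a b ω * collisionTerm r h c d ω ∂μ
      = δ[a, b] * δ[c, d] + (s - 1) * (δ[a, b] * δ[a, c] * δ[a, d])
        + (Fintype.card κ : ℝ)⁻¹
          * (δ[a, c] * δ[b, d] + δ[a, d] * δ[b, c] - 2 * (δ[a, b] * δ[a, c] * δ[a, d])) := by
  have lone {a b c d : ι} (hab : a ≠ b) (hac : a ≠ c) (had : a ≠ d) :=
    integral_collisionTerm_mul_eq_zero (μ := μ) hr hh hindep hrh hL4 hmean hab hac had
  have swap (a b c d : ι) : ∫ ω, collisionTerm r h a b ω * collisionTerm r h c d ω ∂μ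
      = ∫ ω, collisionTerm r h c d ω * collisionTerm r h a b ω ∂μ := by
    simp_rw [mul_comm (collisionTerm r h a b _)]
  have pair {a b : ι} (hab : a ≠ b) :=
    integral_collisionTerm_mul_self hr hh hindep hrh hL4 hmom2 hunif hab
  rcases eq_or_ne a b with rfl | hab
  · rcases eq_or_ne c d with rfl | hcd
    · rcases eq_or_ne a c with rfl | hac
      · simp_rw [collisionTerm_self, ← pow_add]
        simp [hmom4, one_add_one_eq_two]
      · have hrindep : iIndepFun r μ := hindep.comp (fun _ => Prod.fst) fun _ => measurable_fst
        simp_rw [collisionTerm_self]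
        simp [integral_sq_mul_sq hrindep hr hmom2 hac, hac]
    · rcases eq_or_ne a c with rfl | hac
      · rw [collisionTerm_comm a d, swap, lone hcd.symm hcd.symm hcd.symm]
        simp [hcd]
      · rw [swap, lone hcd hac.symm hac.symm]
        simp [hcd, hac]
  · rcases eq_or_ne c d with rfl | hcd
    · rcases eq_or_ne a c with rfl | hac
      · rw [collisionTerm_comm a b, lone hab.symm hab.symm hab.symm]
        simp [hab, hab.symm]
      · rw [lone hab hac hac]
        simp [hab, hac]
    · rcases eq_or_ne a c with rfl | hac
      · rcases eq_or_ne b d with rfl | hbd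
        · simp [pair hab, hab, hab.symm]
        · rw [collisionTerm_comm a b, lone hab.symm hab.symm hbd]
          simp [hab.symm, hcd, hbd]
      · rcases eq_or_ne a d with rfl | had
        · rcases eq_or_ne b c with rfl | hbc
          · rw [collisionTerm_comm b a, pair hab]
            simp [hab, hab.symm]
          · rw [collisionTerm_comm a b, lone hab.symm hbc hab.symm]
            simp [hab, hac, hbc]
        · rw [lone hab hac had]
          simp [hab, hac, had]

lemma covariance_collisionTerm [IsProbabilityMeasure μ] [DecidableEq ι]
    (hr : ∀ i, Measurable (r i)) (hh : ∀ i, Measurable (h i))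
    (hindep : iIndepFun (fun i ω => (r i ω, h i ω)) μ)
    (hrh : ∀ i, IndepFun (r i) (h i) μ) (hL4 : ∀ i, MemLp (r i) 4 μ)
    (hmean : ∀ i, ∫ ω, r i ω ∂μ = 0) (hmom2 : ∀ i, ∫ ω, r i ω ^ 2 ∂μ = 1) {s : ℝ}
    (hmom4 : ∀ i, ∫ ω, r i ω ^ 4 ∂μ = s)
    (hunif : ∀ i j, μ {ω | h i ω = j} = (Fintype.card κ : ENNReal)⁻¹) (a b c d : ι) :
    cov[collisionTerm r h a b, collisionTerm r h c d; μ]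
      = (s - 1) * (δ[a, b] * δ[a, c] * δ[a, d])
        + (Fintype.card κ : ℝ)⁻¹
          * (δ[a, c] * δ[b, d] + δ[a, d] * δ[b, c] - 2 * (δ[a, b] * δ[a, c] * δ[a, d])) := by
  rw [covariance_eq_sub (memLp_collisionTerm hr hh hL4 a b) (memLp_collisionTerm hr hh hL4 c d)]
  simp only [Pi.mul_apply]
  rw [integral_collisionTerm_mul hr hh hindep hrh hL4 hmean hmom2 hmom4 hunif,
    integral_collisionTerm hr hh hindep hrh hL4 hmean hmom2,
    integral_collisionTerm hr hh hindep hrh hL4 hmean hmom2]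
  ring

end moments

lemma sum_sum_mul_kronecker {ι : Type*} [Fintype ι] [DecidableEq ι] (u1 u2 : ι → ℝ) (s K : ℝ) :
    ∑ p : ι × ι, ∑ q : ι × ι, u1 p.1 * u2 p.2 * (u1 q.1 * u2 q.2 *
      ((s - 1) * (δ[p.1, p.2] * δ[p.1, q.1] * δ[p.1, q.2])
        + K * (δ[p.1, q.1] * δ[p.2, q.2] + δ[p.1, q.2] * δ[p.2, q.1]
          - 2 * (δ[p.1, p.2] * δ[p.1, q.1] * δ[p.1, q.2]))))
      = (s - 1) * ∑ i, u1 i ^ 2 * u2 i ^ 2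
        + K * ((∑ i, u1 i ^ 2) * (∑ i, u2 i ^ 2) + (∑ i, u1 i * u2 i) ^ 2
          - 2 * ∑ i, u1 i ^ 2 * u2 i ^ 2) := by
  set c : ι × ι → ℝ := fun p => u1 p.1 * u2 p.2
  have hdiag : ∑ p : ι × ι, ∑ q : ι × ι, c p * c q * (δ[p.1, p.2] * δ[p.1, q.1] * δ[p.1, q.2])
      = ∑ i, u1 i ^ 2 * u2 i ^ 2 := by
    simp only [c, Fintype.sum_prod_type, mul_ite, mul_one, mul_zero, Finset.sum_ite_eq,
      Finset.mem_univ, if_true]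
    exact Finset.sum_congr rfl fun i _ => by ring
  have hsame : ∑ p : ι × ι, ∑ q : ι × ι, c p * c q * (δ[p.1, q.1] * δ[p.2, q.2])
      = (∑ i, u1 i ^ 2) * (∑ i, u2 i ^ 2) := by
    simp only [c, Fintype.sum_prod_type, mul_ite, mul_one, mul_zero, Finset.sum_ite_eq,
      Finset.mem_univ, if_true, Finset.sum_mul_sum]
    exact Finset.sum_congr rfl fun i _ => Finset.sum_congr rfl fun j _ => by ring
  have hswap : ∑ p : ι × ι, ∑ q : ι × ι, c p * c q * (δ[p.1, q.2] * δ[p.2, q.1])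
      = (∑ i, u1 i * u2 i) ^ 2 := by
    simp only [c, Fintype.sum_prod_type, mul_ite, mul_one, mul_zero, Finset.sum_ite_irrel,
      Finset.sum_ite_eq, Finset.mem_univ, if_true, Finset.sum_const_zero, sq, Finset.sum_mul_sum]
    exact Finset.sum_congr rfl fun i _ => Finset.sum_congr rfl fun j _ => by ring
  rw [← hdiag, ← hsame, ← hswap]
  simp only [Finset.mul_sum, ← Finset.sum_add_distrib, ← Finset.sum_sub_distrib]
  exact Finset.sum_congr rfl fun p _ => Finset.sum_congr rfl fun q _ => by ring

theorem stmt14_general {Ω : Type*} [MeasurableSpace Ω] (μ : Measure Ω) [IsProbabilityMeasure μ]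
    (D k : ℕ) (u1 u2 : Fin D → ℝ) (s : ℝ)
    (r : Fin D → Ω → ℝ) (h : Fin D → Ω → Fin k)
    (hrmeas : ∀ i, Measurable (r i)) (hhmeas : ∀ i, Measurable (h i))
    (hindep : iIndepFun (fun i ω => (r i ω, h i ω)) μ)
    (hrh : ∀ i, IndepFun (r i) (h i) μ)
    (hL4 : ∀ i, MemLp (r i) 4 μ)
    (hmean : ∀ i, ∫ ω, r i ω ∂μ = 0)
    (hmom2 : ∀ i, ∫ ω, (r i ω) ^ 2 ∂μ = 1)
    (hmom4 : ∀ i, ∫ ω, (r i ω) ^ 4 ∂μ = s)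
    (hunif : ∀ i (j : Fin k), μ {ω | h i ω = j} = (k : ENNReal)⁻¹) :
    variance (fun ω => ∑ j : Fin k,
        (∑ i : Fin D, u1 i * r i ω * (if h i ω = j then (1 : ℝ) else 0))
          * (∑ i : Fin D, u2 i * r i ω * (if h i ω = j then (1 : ℝ) else 0))) μ
      = (s - 1) * (∑ i : Fin D, (u1 i) ^ 2 * (u2 i) ^ 2)
        + (1 / (k : ℝ)) * ((∑ i : Fin D, (u1 i) ^ 2) * (∑ i : Fin D, (u2 i) ^ 2)
            + (∑ i : Fin D, u1 i * u2 i) ^ 2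
            - 2 * ∑ i : Fin D, (u1 i) ^ 2 * (u2 i) ^ 2) := by
  have hunif' : ∀ i j, μ {ω | h i ω = j} = (Fintype.card (Fin k) : ENNReal)⁻¹ := by
    simpa using hunif
  have hterm (p : Fin D × Fin D) :
      MemLp (fun ω => u1 p.1 * u2 p.2 * collisionTerm r h p.1 p.2 ω) 2 μ :=
    (memLp_collisionTerm hrmeas hhmeas hL4 p.1 p.2).const_mul _
  simp_rw [sum_mul_sum_eq_sum_collisionTerm u1 u2]
  rw [← covariance_self (memLp_finsetSum _ fun p _ => hterm p).aemeasurable,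
    covariance_fun_sum_fun_sum hterm hterm]
  simp_rw [covariance_const_mul_left, covariance_const_mul_right,
    covariance_collisionTerm hrmeas hhmeas hindep hrh hL4 hmean hmom2 hmom4 hunif']
  rw [← sum_sum_mul_kronecker, Fintype.card_fin, one_div]

/-- Let `u1, u2 ∈ ℝ^D`, let `r_1, …, r_D` be i.i.d. with `E[r_i] = 0`,
`E[r_i^2] = 1`, `E[r_i^3] = 0`, `E[r_i^4] = s < ∞`, and let `h(1), …, h(D)` be i.i.d. uniform on
`{1, …, k}`, independent of the `r_i` (the pairs `(r_i, h(i))` form an independent family and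
within each pair `r_i ⟂ h(i)`). With `g_{1,j} = Σ_i u_{1,i} r_i 1{h(i)=j}`,
`g_{2,j} = Σ_i u_{2,i} r_i 1{h(i)=j}`, the VW estimator `â_{vw,s} = Σ_j g_{1,j} g_{2,j}` has
variance `(s−1) Σ u_{1,i}^2 u_{2,i}^2 + (1/k)[(Σ u_{1,i}^2)(Σ u_{2,i}^2) + (Σ u_{1,i}u_{2,i})^2
− 2 Σ u_{1,i}^2 u_{2,i}^2]`. -/
theorem stmt14 {Ω : Type*} [MeasurableSpace Ω] (μ : Measure Ω) [IsProbabilityMeasure μ]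
    (D k : ℕ) (hk : 1 ≤ k) (u1 u2 : Fin D → ℝ) (s : ℝ)
    (r : Fin D → Ω → ℝ) (h : Fin D → Ω → Fin k)
    (hrmeas : ∀ i, Measurable (r i)) (hhmeas : ∀ i, Measurable (h i))
    (hindep : iIndepFun (fun i ω => (r i ω, h i ω)) μ)
    (hrh : ∀ i, IndepFun (r i) (h i) μ)
    (hident : ∀ i i', IdentDistrib (r i) (r i') μ μ)
    (hL4 : ∀ i, MemLp (r i) 4 μ)
    (hmean : ∀ i, ∫ ω, r i ω ∂μ = 0)
    (hmom2 : ∀ i, ∫ ω, (r i ω) ^ 2 ∂μ = 1)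
    (hmom3 : ∀ i, ∫ ω, (r i ω) ^ 3 ∂μ = 0)
    (hmom4 : ∀ i, ∫ ω, (r i ω) ^ 4 ∂μ = s)
    (hunif : ∀ i (j : Fin k), μ {ω | h i ω = j} = (k : ENNReal)⁻¹) :
    variance (fun ω => ∑ j : Fin k,
        (∑ i : Fin D, u1 i * r i ω * (if h i ω = j then (1 : ℝ) else 0))
          * (∑ i : Fin D, u2 i * r i ω * (if h i ω = j then (1 : ℝ) else 0))) μ
      = (s - 1) * (∑ i : Fin D, (u1 i) ^ 2 * (u2 i) ^ 2)
        + (1 / (k : ℝ)) * ((∑ i : Fin D, (u1 i) ^ 2) * (∑ i : Fin D, (u2 i) ^ 2)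
            + (∑ i : Fin D, u1 i * u2 i) ^ 2
            - 2 * ∑ i : Fin D, (u1 i) ^ 2 * (u2 i) ^ 2) :=
  stmt14_general μ D k u1 u2 s r h hrmeas hhmeas hindep hrh hL4 hmean hmom2 hmom4 hunif
end

section
/- Let u1, u2 ∈ ℝ^D and let h(1), ..., h(D) be i.i.d. random variables uniformly distributed on {1, ..., k}. Define w_{1,j} = Σ_{i=1}^{D} u_{1,i} 1{h(i) = j} and w_{2,j} = Σ_{i=1}^{D} u_{2,i} 1{h(i) = j} for j = 1, ..., k, and the Count-Min estimator â_{cm} = Σ_{j=1}^{k} w_{1,j} w_{2,j}. Then E[â_{cm}] = a + (1/k)·[(Σ_{i=1}^{D} u_{1,i})(Σ_{i=1}^{D} u_{2,i}) − a], where a = Σ_{i=1}^{D} u_{1,i} u_{2,i}; in particular â_{cm} is a biased estimator of a whenever (Σ_i u_{1,i})(Σ_i u_{2,i}) ≠ a. -/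
open MeasureTheory ProbabilityTheory

/-!
Expanding the product of the bins gives `â_cm = Σ_{i,i'} u_{1,i} u_{2,i'} 1{h(i) = h(i')}`.
A coordinate always collides with itself, and by independence and uniformity two distinct
coordinates collide with probability `1/k`, so the expectation is the diagonal sum `a` plus
`1/k` times the off-diagonal sum `(Σ_i u_{1,i})(Σ_i u_{2,i}) − a`.
-/

open Finset Function
open scoped ENNReal

theorem sum_bin_mul_sum_bin {ι β R : Type*} [Fintype ι] [Fintype β] [DecidableEq β]
    [CommSemiring R] (a b : ι → R) (g : ι → β) :
    ∑ j, (∑ i, a i * if g i = j then 1 else 0) * (∑ i, b i * if g i = j then 1 else 0)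
      = ∑ i, ∑ i', a i * b i' * if g i = g i' then 1 else 0 := by
  simp_rw [sum_mul_sum, mul_mul_mul_comm]
  rw [sum_comm]
  refine sum_congr rfl fun i _ => ?_
  rw [sum_comm]
  refine sum_congr rfl fun i' _ => ?_
  simp [eq_comm]

theorem sum_sum_mul_ite_eq {ι R : Type*} [Fintype ι] [DecidableEq ι] [CommRing R]
    (a b : ι → R) (c : R) :
    ∑ i, ∑ i', a i * b i' * (if i = i' then 1 else c)
      = ∑ i, a i * b i + c * ((∑ i, a i) * (∑ i, b i) - ∑ i, a i * b i) := by
  have hsplit : ∀ i i' : ι, a i * b i' * (if i = i' then 1 else c)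
      = c * (a i * b i') + if i = i' then (1 - c) * (a i * b i') else 0 := by
    intro i i'; split_ifs <;> ring
  simp only [hsplit, sum_add_distrib, ← mul_sum, sum_ite_eq, mem_univ, if_true, sum_mul_sum]
  ring

namespace ProbabilityTheory

variable {Ω β : Type*} [MeasurableSpace Ω] {μ : Measure Ω} [IsProbabilityMeasure μ]
  [Fintype β] [MeasurableSpace β] [MeasurableSingletonClass β]

theorem IndepFun.measure_eq_eq_inv_card {X Y : Ω → β} (hX : Measurable X) (hY : Measurable Y)
    (hXY : IndepFun X Y μ) (hXunif : ∀ b, μ {ω | X ω = b} = (Fintype.card β : ℝ≥0∞)⁻¹) :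
    μ {ω | X ω = Y ω} = (Fintype.card β : ℝ≥0∞)⁻¹ := by
  have hfibers : {ω | X ω = Y ω} = ⋃ b, X ⁻¹' {b} ∩ Y ⁻¹' {b} := by
    ext ω; simp [eq_comm]
  have hdisj : Pairwise (Disjoint on fun b => X ⁻¹' {b} ∩ Y ⁻¹' {b}) := fun b b' hbb' =>
    ((Set.disjoint_singleton.2 hbb').preimage X).mono Set.inter_subset_left Set.inter_subset_left
  have hXunif' : ∀ b, μ (X ⁻¹' {b}) = (Fintype.card β : ℝ≥0∞)⁻¹ := hXunif
  rw [hfibers, measure_iUnion hdisj fun b => (hX (.singleton b)).inter (hY (.singleton b)),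
    tsum_fintype]
  simp_rw [hXY.measure_inter_preimage_eq_mul _ _ (.singleton _) (.singleton _), hXunif', ← mul_sum,
    sum_measure_preimage_singleton _ fun b _ => hY (.singleton b)]
  simp

variable [DecidableEq β] {ι : Type*} [DecidableEq ι] {h : ι → Ω → β}

theorem iIndepFun.integral_ite_eq (hmeas : ∀ i, Measurable (h i)) (hindep : iIndepFun h μ)
    (hunif : ∀ i b, μ {ω | h i ω = b} = (Fintype.card β : ℝ≥0∞)⁻¹) (i i' : ι) :
    ∫ ω, (if h i ω = h i' ω then (1 : ℝ) else 0) ∂μ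
      = if i = i' then 1 else (Fintype.card β : ℝ)⁻¹ := by
  rcases eq_or_ne i i' with rfl | hne
  · simp
  have hindicator : (fun ω => if h i ω = h i' ω then (1 : ℝ) else 0)
      = {ω | h i ω = h i' ω}.indicator 1 := by
    ext ω; simp [Set.indicator_apply]
  rw [hindicator, integral_indicator_one (measurableSet_eq_fun (hmeas i) (hmeas i')),
    measureReal_def,
    (hindep.indepFun hne).measure_eq_eq_inv_card (hmeas i) (hmeas i') (hunif i)]
  simp [hne]

theorem iIndepFun.integral_sum_sum_mul_ite_eq [Fintype ι] (hmeas : ∀ i, Measurable (h i))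
    (hindep : iIndepFun h μ) (hunif : ∀ i b, μ {ω | h i ω = b} = (Fintype.card β : ℝ≥0∞)⁻¹)
    (a b : ι → ℝ) :
    ∫ ω, ∑ i, ∑ i', a i * b i' * (if h i ω = h i' ω then 1 else 0) ∂μ
      = ∑ i, ∑ i', a i * b i' * (if i = i' then 1 else (Fintype.card β : ℝ)⁻¹) := by
  have hint : ∀ i i',
      Integrable (fun ω => a i * b i' * if h i ω = h i' ω then (1 : ℝ) else 0) μ := by
    intro i i'
    refine (Integrable.of_bound ?_ 1 (ae_of_all _ fun ω => by split_ifs <;> simp)).const_mul _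
    exact (Measurable.ite (measurableSet_eq_fun (hmeas i) (hmeas i')) measurable_const
      measurable_const).aestronglyMeasurable
  rw [integral_finsetSum _ fun i _ => integrable_finsetSum _ fun i' _ => hint i i']
  refine sum_congr rfl fun i _ => ?_
  rw [integral_finsetSum _ fun i' _ => hint i i']
  refine sum_congr rfl fun i' _ => ?_
  rw [integral_const_mul, hindep.integral_ite_eq hmeas hunif]

end ProbabilityTheory

/-- Let `u1, u2 ∈ ℝ^D` and let `h(1), …, h(D)` be i.i.d. uniform on
`{1, …, k}`. With `w_{1,j} = Σ_i u_{1,i} 1{h(i)=j}` and `w_{2,j} = Σ_i u_{2,i} 1{h(i)=j}`, the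
Count-Min estimator `â_cm = Σ_j w_{1,j} w_{2,j}` satisfies
`E[â_cm] = a + (1/k)·[(Σ_i u_{1,i})(Σ_i u_{2,i}) − a]` where `a = Σ_i u_{1,i} u_{2,i}`;
in particular `â_cm` is biased whenever `(Σ_i u_{1,i})(Σ_i u_{2,i}) ≠ a`. -/
theorem stmt17 {Ω : Type*} [MeasurableSpace Ω] (μ : Measure Ω) [IsProbabilityMeasure μ]
    (D k : ℕ) (hk : 1 ≤ k) (u1 u2 : Fin D → ℝ)
    (h : Fin D → Ω → Fin k)
    (hhmeas : ∀ i, Measurable (h i))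
    (hindep : iIndepFun h μ)
    (hunif : ∀ i (j : Fin k), μ {ω | h i ω = j} = (k : ENNReal)⁻¹) :
    (∫ ω, ∑ j : Fin k,
        (∑ i : Fin D, u1 i * (if h i ω = j then (1 : ℝ) else 0))
          * (∑ i : Fin D, u2 i * (if h i ω = j then (1 : ℝ) else 0)) ∂μ
      = (∑ i : Fin D, u1 i * u2 i)
        + (1 / (k : ℝ)) * ((∑ i : Fin D, u1 i) * (∑ i : Fin D, u2 i)
            - ∑ i : Fin D, u1 i * u2 i))
    ∧ ((∑ i : Fin D, u1 i) * (∑ i : Fin D, u2 i) ≠ ∑ i : Fin D, u1 i * u2 i →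
        ∫ ω, ∑ j : Fin k,
            (∑ i : Fin D, u1 i * (if h i ω = j then (1 : ℝ) else 0))
              * (∑ i : Fin D, u2 i * (if h i ω = j then (1 : ℝ) else 0)) ∂μ
          ≠ ∑ i : Fin D, u1 i * u2 i) := by
  have hexpect : ∫ ω, ∑ j : Fin k,
        (∑ i : Fin D, u1 i * (if h i ω = j then (1 : ℝ) else 0))
          * (∑ i : Fin D, u2 i * (if h i ω = j then (1 : ℝ) else 0)) ∂μ
      = (∑ i : Fin D, u1 i * u2 i)
        + (1 / (k : ℝ)) * ((∑ i : Fin D, u1 i) * (∑ i : Fin D, u2 i)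
            - ∑ i : Fin D, u1 i * u2 i) := by
    simp_rw [sum_bin_mul_sum_bin]
    rw [hindep.integral_sum_sum_mul_ite_eq hhmeas (by simpa using hunif), Fintype.card_fin,
      sum_sum_mul_ite_eq, one_div]
  refine ⟨hexpect, fun hne hunbiased => hne ?_⟩
  rw [hexpect, add_eq_left, mul_eq_zero, sub_eq_zero] at hunbiased
  exact hunbiased.resolve_left (by positivity)
end
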